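/- For any α > 0, any t* > 0, and any function φ ∈ L²(0, t*), the double integral ∫₀^{t*} (∫₀^t exp(-α(t-s)) φ(s) ds) φ(t) dt is nonnegative. -/

import Mathlib

open MeasureTheory Set Real

/-! Write `k(t, s) = exp (-α (t - s)) 𝟙{s ≤ t}`, so that the double integral is
`∫∫ k(t, s) φ(s) φ(t)`. Symmetrising in `(t, s)`, the kernel `k(t, s) + k(s, t)` is
`exp (-α |t - s|)` plus the indicator of the diagonal, which only adds `φ(t)² ≥ 0`.
Finally `exp (-α |t - s|) = 2α ∫ k(u, t) k(u, s) du`, so the quadratic form of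
`exp (-α |t - s|)` equals `2α ∫ (∫ k(u, t) φ(t) dt)² du ≥ 0`. -/

section Gram

variable {X U : Type*} [MeasurableSpace X] [MeasurableSpace U] {μ : Measure X} {ν : Measure U}
  [SFinite μ] [SFinite ν]

theorem integral_gram_mul_mul_nonneg (f : U → X → ℝ) (φ : X → ℝ)
    (hf : Integrable (fun q : (X × X) × U => f q.2 q.1.1 * φ q.1.1 * (f q.2 q.1.2 * φ q.1.2))
      ((μ.prod μ).prod ν)) :
    0 ≤ ∫ p, (∫ u, f u p.1 * f u p.2 ∂ν) * (φ p.1 * φ p.2) ∂(μ.prod μ) := by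
  calc (0 : ℝ) ≤ ∫ u, (∫ x, f u x * φ x ∂μ) ^ 2 ∂ν := integral_nonneg fun _ => sq_nonneg _
    _ = ∫ p, ∫ u, f u p.1 * φ p.1 * (f u p.2 * φ p.2) ∂ν ∂(μ.prod μ) := by
      rw [integral_integral_swap hf]
      congr 1 with u
      rw [sq]
      exact (integral_prod_mul (fun x => f u x * φ x) (fun x => f u x * φ x)).symm
    _ = _ := by
      congr 1 with p
      rw [← integral_mul_const]
      congr 1 with u
      ring

end Gram

noncomputable def causalExpKernel (α t s : ℝ) : ℝ := if s ≤ t then exp (-α * (t - s)) else 0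

section CausalExpKernel

variable {α : ℝ}

theorem causalExpKernel_nonneg (α t s : ℝ) : 0 ≤ causalExpKernel α t s := by
  unfold causalExpKernel; split <;> positivity

theorem norm_causalExpKernel_le_one (hα : 0 ≤ α) (t s : ℝ) : ‖causalExpKernel α t s‖ ≤ 1 := by
  rw [norm_of_nonneg (causalExpKernel_nonneg α t s)]
  unfold causalExpKernel; split
  · exact exp_le_one_iff.mpr (by nlinarith [sub_nonneg.mpr ‹s ≤ t›])
  · exact zero_le_one

theorem measurable_causalExpKernel (α : ℝ) :
    Measurable fun p : ℝ × ℝ => causalExpKernel α p.1 p.2 :=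
  Measurable.ite (measurableSet_le measurable_snd measurable_fst) (by fun_prop) measurable_const

theorem causalExpKernel_add_swap (α t s : ℝ) :
    causalExpKernel α t s + causalExpKernel α s t = exp (-α * |t - s|) + if t = s then 1 else 0 := by
  unfold causalExpKernel
  rcases lt_trichotomy t s with h | rfl | h
  · rw [if_neg h.not_ge, if_pos h.le, if_neg h.ne, abs_of_neg (sub_neg.mpr h), zero_add, add_zero,
      neg_sub]
  · simp
  · rw [if_pos h.le, if_neg h.not_ge, if_neg h.ne', abs_of_pos (sub_pos.mpr h)]

theorem causalExpKernel_mul_causalExpKernel (α a b : ℝ) :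
    (fun u => causalExpKernel α u a * causalExpKernel α u b) =
      (Ici (max a b)).indicator fun u => exp (α * (a + b)) * exp (-(2 * α) * u) := by
  ext u
  unfold causalExpKernel
  by_cases h : max a b ≤ u
  · rw [if_pos ((le_max_left a b).trans h), if_pos ((le_max_right a b).trans h),
      indicator_of_mem (mem_Ici.mpr h), ← exp_add, ← exp_add]
    ring_nf
  · rw [indicator_of_notMem (by simpa using h)]
    rcases lt_max_iff.mp (not_le.mp h) with ha | hb
    · rw [if_neg ha.not_ge, zero_mul]
    · rw [if_neg hb.not_ge, mul_zero]

theorem integrable_causalExpKernel_mul (hα : 0 < α) (a b : ℝ) :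
    Integrable fun u => causalExpKernel α u a * causalExpKernel α u b := by
  rw [causalExpKernel_mul_causalExpKernel, integrable_indicator_iff measurableSet_Ici,
    integrableOn_Ici_iff_integrableOn_Ioi]
  exact (integrableOn_exp_mul_Ioi (by linarith) _).const_mul _

theorem integral_causalExpKernel_mul (hα : 0 < α) (a b : ℝ) :
    ∫ u, causalExpKernel α u a * causalExpKernel α u b = exp (-α * |a - b|) / (2 * α) := by
  rw [causalExpKernel_mul_causalExpKernel, integral_indicator measurableSet_Ici,
    integral_Ici_eq_integral_Ioi, integral_const_mul, integral_exp_mul_Ioi (by linarith),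
    neg_div_neg_eq, mul_div_assoc', ← exp_add]
  congr 2
  rcases le_total a b with h | h
  · rw [max_eq_right h, abs_of_nonpos (by linarith)]; ring
  · rw [max_eq_left h, abs_of_nonneg (by linarith)]; ring

end CausalExpKernel

section QuadraticForm

variable {α : ℝ} {μ : Measure ℝ} {φ : ℝ → ℝ}

theorem integrable_causalExpKernel_mul_mul_prod (hα : 0 < α) (hφ : Integrable φ μ) :
    Integrable (fun q : (ℝ × ℝ) × ℝ =>
      causalExpKernel α q.2 q.1.1 * φ q.1.1 * (causalExpKernel α q.2 q.1.2 * φ q.1.2))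
      ((μ.prod μ).prod volume) := by
  have hk := measurable_causalExpKernel α
  have hmeas : AEStronglyMeasurable (fun q : (ℝ × ℝ) × ℝ =>
      causalExpKernel α q.2 q.1.1 * φ q.1.1 * (causalExpKernel α q.2 q.1.2 * φ q.1.2))
      ((μ.prod μ).prod volume) :=
    ((hk.comp (f := fun q : (ℝ × ℝ) × ℝ => (q.2, q.1.1)) (by fun_prop)).aestronglyMeasurable.mul
        hφ.1.comp_fst.comp_fst).mul
      ((hk.comp (f := fun q : (ℝ × ℝ) × ℝ => (q.2, q.1.2)) (by fun_prop)).aestronglyMeasurable.mul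
        hφ.1.comp_snd.comp_fst)
  have hfactor (p : ℝ × ℝ) (u : ℝ) :
      causalExpKernel α u p.1 * φ p.1 * (causalExpKernel α u p.2 * φ p.2) =
        causalExpKernel α u p.1 * causalExpKernel α u p.2 * (φ p.1 * φ p.2) := by ring
  refine (integrable_prod_iff hmeas).mpr ⟨ae_of_all _ fun p => ?_, ?_⟩
  · simp only [hfactor]
    exact (integrable_causalExpKernel_mul hα p.1 p.2).mul_const _
  · simp only [hfactor, norm_mul, norm_of_nonneg (causalExpKernel_nonneg _ _ _)]
    simp only [integral_mul_const, integral_causalExpKernel_mul hα, ← norm_mul]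
    refine (hφ.mul_prod hφ).norm.bdd_mul (c := 1 / (2 * α)) (by fun_prop) (ae_of_all _ fun p => ?_)
    rw [norm_of_nonneg (by positivity)]
    gcongr
    exact exp_le_one_iff.mpr (by nlinarith [abs_nonneg (p.1 - p.2)])

theorem integral_exp_neg_mul_abs_sub_mul_nonneg [SFinite μ] (hα : 0 < α) (hφ : Integrable φ μ) :
    0 ≤ ∫ p, exp (-α * |p.1 - p.2|) * (φ p.1 * φ p.2) ∂(μ.prod μ) := by
  have hgram (p : ℝ × ℝ) : exp (-α * |p.1 - p.2|) =
      2 * α * ∫ u, causalExpKernel α u p.1 * causalExpKernel α u p.2 := by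
    rw [integral_causalExpKernel_mul hα]
    field_simp
  calc (0 : ℝ) ≤ 2 * α * ∫ p, (∫ u, causalExpKernel α u p.1 * causalExpKernel α u p.2) *
        (φ p.1 * φ p.2) ∂(μ.prod μ) :=
      mul_nonneg (by positivity) (integral_gram_mul_mul_nonneg _ φ
        (integrable_causalExpKernel_mul_mul_prod hα hφ))
    _ = _ := by
      rw [← integral_const_mul]
      congr 1 with p
      rw [hgram]
      ring

theorem integral_causalExpKernel_mul_nonneg [SFinite μ] (hα : 0 < α) (hφ : Integrable φ μ) :
    0 ≤ ∫ t, (∫ s, causalExpKernel α t s * φ s ∂μ) * φ t ∂μ := by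
  have hφφ := hφ.mul_prod hφ
  have hbdd (K : ℝ × ℝ → ℝ) (hK : Measurable K) (hK1 : ∀ p, ‖K p‖ ≤ 1) :
      Integrable (fun p => K p * (φ p.1 * φ p.2)) (μ.prod μ) :=
    hφφ.bdd_mul hK.aestronglyMeasurable (ae_of_all _ hK1)
  have hk := measurable_causalExpKernel α
  have hk_int := hbdd _ hk fun p => norm_causalExpKernel_le_one hα.le p.1 p.2
  have hk_swap_int := hbdd (fun p => causalExpKernel α p.2 p.1) (hk.comp measurable_swap)
    fun p => norm_causalExpKernel_le_one hα.le p.2 p.1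
  have hexp_int := hbdd (fun p => exp (-α * |p.1 - p.2|)) (by fun_prop) fun p => by
    rw [norm_of_nonneg (exp_pos _).le, exp_le_one_iff]
    nlinarith [abs_nonneg (p.1 - p.2)]
  have hfubini : ∫ t, (∫ s, causalExpKernel α t s * φ s ∂μ) * φ t ∂μ =
      ∫ p, causalExpKernel α p.1 p.2 * (φ p.1 * φ p.2) ∂(μ.prod μ) := by
    rw [integral_prod _ hk_int]
    congr 1 with t
    rw [← integral_mul_const]
    congr 1 with s
    ring
  have hswap : ∫ p, causalExpKernel α p.2 p.1 * (φ p.1 * φ p.2) ∂(μ.prod μ) =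
      ∫ p, causalExpKernel α p.1 p.2 * (φ p.1 * φ p.2) ∂(μ.prod μ) := by
    rw [← integral_prod_swap]
    congr 1 with p
    rw [Prod.fst_swap, Prod.snd_swap, mul_comm (φ p.2)]
  have hsymm : ∫ p, exp (-α * |p.1 - p.2|) * (φ p.1 * φ p.2) ∂(μ.prod μ) ≤
      ∫ p, causalExpKernel α p.1 p.2 * (φ p.1 * φ p.2) ∂(μ.prod μ) +
        ∫ p, causalExpKernel α p.2 p.1 * (φ p.1 * φ p.2) ∂(μ.prod μ) := by
    rw [← integral_add hk_int hk_swap_int]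
    refine integral_mono hexp_int (hk_int.add hk_swap_int) fun p => ?_
    rw [← add_mul, causalExpKernel_add_swap, add_mul]
    split_ifs with h
    · rw [h]; nlinarith [mul_self_nonneg (φ p.2)]
    · simp
  linarith [integral_exp_neg_mul_abs_sub_mul_nonneg hα hφ]

end QuadraticForm

theorem setIntegral_causalExpKernel_mul {α a t T : ℝ} (φ : ℝ → ℝ) (htT : t ≤ T) :
    ∫ s in Ioc a T, causalExpKernel α t s * φ s = ∫ s in Ioc a t, exp (-α * (t - s)) * φ s := by
  have hind : (fun s => causalExpKernel α t s * φ s) =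
      (Iic t).indicator fun s => exp (-α * (t - s)) * φ s := by
    ext s
    simp only [causalExpKernel, indicator_apply, mem_Iic, ite_mul, zero_mul]
  rw [hind, setIntegral_indicator measurableSet_Iic, Ioc_inter_Iic, min_eq_right htT]

theorem positivity_of_exponential_memory_kernel_general
    (α : ℝ) (hα : 0 < α) (tstar : ℝ)
    (φ : ℝ → ℝ)
    (hφ : MemLp φ 2 (volume.restrict (Set.Ioc (0:ℝ) tstar))) :
    0 ≤ ∫ t in Set.Ioc (0:ℝ) tstar,
        (∫ s in Set.Ioc (0:ℝ) t, Real.exp (-α * (t - s)) * φ s) * φ t := by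
  rw [setIntegral_congr_fun measurableSet_Ioc fun t ht => by
    rw [← setIntegral_causalExpKernel_mul φ ht.2]]
  exact integral_causalExpKernel_mul_nonneg hα (hφ.integrable one_le_two)

theorem positivity_of_exponential_memory_kernel
    (α : ℝ) (hα : 0 < α) (tstar : ℝ) (htstar : 0 < tstar)
    (φ : ℝ → ℝ)
    (hφ : MemLp φ 2 (volume.restrict (Set.Ioc (0:ℝ) tstar))) :
    0 ≤ ∫ t in Set.Ioc (0:ℝ) tstar,
        (∫ s in Set.Ioc (0:ℝ) t, Real.exp (-α * (t - s)) * φ s) * φ t :=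
  positivity_of_exponential_memory_kernel_general α hα tstar φ hφ
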